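/- Let H, G : ℝ → ℝ be bounded measurable functions with H(f) + G(f) = 1 for all f, and let S : ℝ → ℝ be integrable on [−1/2, 1/2]. If the scaling covariances vanish asymptotically, i.e. C_J → 0 as J → ∞, then the series ∑_{j=1}^{∞} γ_j converges and ∫_{−1/2}^{1/2} S(f) df = ∑_{j=1}^{∞} γ_j. That is, the covariance of the bivariate process equals the infinite sum of its wavelet covariances over all scales. -/

import Mathlib

open Finset MeasureTheory Filter

/-- The level-`J` scaling covariance
`C_J = ∫_{−1/2}^{1/2} (∏_{l=0}^{J−1} G(2^l f)) S(f) df`. -/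
noncomputable def scalingCov (G S : ℝ → ℝ) (J : ℕ) : ℝ :=
  ∫ f in (-(1 : ℝ) / 2)..(1 / 2), (∏ l ∈ Finset.range J, G ((2 : ℝ) ^ l * f)) * S f

/-- The level-`J` wavelet covariance
`γ_J = ∫_{−1/2}^{1/2} H(2^{J−1} f) (∏_{l=0}^{J−2} G(2^l f)) S(f) df`. -/
noncomputable def waveletCov (H G S : ℝ → ℝ) (J : ℕ) : ℝ :=
  ∫ f in (-(1 : ℝ) / 2)..(1 / 2),
    H ((2 : ℝ) ^ (J - 1) * f) * (∏ l ∈ Finset.range (J - 1), G ((2 : ℝ) ^ l * f)) * S f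

/-! Since `H = 1 - G`, the integrand of `γ_{J+1}` is the difference of the integrands of `C_J` and
`C_{J+1}`. The partial sums of the wavelet covariances therefore telescope to `C_0 - C_J`, which
tends to `C_0 = ∫ S` when the scaling covariances vanish asymptotically. -/

theorem IntervalIntegrable.bdd_mul {φ S : ℝ → ℝ} {μ : Measure ℝ} {a b C : ℝ}
    (hS : IntervalIntegrable S μ a b) (hφ : Measurable φ) (hφC : ∀ x, |φ x| ≤ C) :
    IntervalIntegrable (fun x => φ x * S x) μ a b := by
  rw [intervalIntegrable_iff] at hS ⊢
  exact hS.bdd_mul hφ.aestronglyMeasurable (Eventually.of_forall hφC)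

/-- The squared gain `∏_{l<J} G(2^l f)` of the level-`J` scaling filter, so that
`C_J = ∫ scalingGain G J f * S f`. -/
noncomputable def scalingGain (G : ℝ → ℝ) (J : ℕ) (f : ℝ) : ℝ :=
  ∏ l ∈ range J, G (2 ^ l * f)

section scalingGain

variable {G : ℝ → ℝ}

theorem scalingGain_succ (J : ℕ) (f : ℝ) :
    scalingGain G (J + 1) f = scalingGain G J f * G (2 ^ J * f) :=
  prod_range_succ _ _

theorem measurable_scalingGain (hG : Measurable G) (J : ℕ) : Measurable (scalingGain G J) :=
  Finset.measurable_prod _ fun _ _ => hG.comp (measurable_const_mul _)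

theorem abs_scalingGain_le {C : ℝ} (hGC : ∀ f, |G f| ≤ C) (J : ℕ) (f : ℝ) :
    |scalingGain G J f| ≤ C ^ J :=
  calc |scalingGain G J f| = ∏ l ∈ range J, |G (2 ^ l * f)| := abs_prod _ _
    _ ≤ ∏ _l ∈ range J, C := prod_le_prod (fun _ _ => abs_nonneg _) fun _ _ => hGC _
    _ = C ^ J := by rw [prod_const, card_range]

theorem IntervalIntegrable.scalingGain_mul {S : ℝ → ℝ} {μ : Measure ℝ} {a b : ℝ}
    (hS : IntervalIntegrable S μ a b) (hG : Measurable G) (hGbd : ∃ C, ∀ f, |G f| ≤ C)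
    (J : ℕ) : IntervalIntegrable (fun f => scalingGain G J f * S f) μ a b :=
  hGbd.elim fun _ hGC => hS.bdd_mul (measurable_scalingGain hG J) (abs_scalingGain_le hGC J)

end scalingGain

section covariances

variable {H G S : ℝ → ℝ}

theorem scalingCov_zero : scalingCov G S 0 = ∫ f in (-(1 : ℝ) / 2)..(1 / 2), S f := by
  simp [scalingCov]

theorem waveletCov_succ (hHG : ∀ f, H f + G f = 1) (hG : Measurable G)
    (hGbd : ∃ C, ∀ f, |G f| ≤ C) (hS : IntervalIntegrable S volume (-(1 : ℝ) / 2) (1 / 2))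
    (J : ℕ) : waveletCov H G S (J + 1) = scalingCov G S J - scalingCov G S (J + 1) := by
  have hH : ∀ f, H f = 1 - G f := fun f => eq_sub_of_add_eq (hHG f)
  have hgain := hS.scalingGain_mul hG hGbd
  change _ = (∫ f in _.._, scalingGain G J f * S f) - ∫ f in _.._, scalingGain G (J + 1) f * S f
  rw [← intervalIntegral.integral_sub (hgain J) (hgain (J + 1))]
  refine intervalIntegral.integral_congr fun f _ => ?_
  simp only [Nat.add_sub_cancel, scalingGain_succ, hH]
  unfold scalingGain
  ring

theorem sum_Icc_waveletCov (hHG : ∀ f, H f + G f = 1) (hG : Measurable G)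
    (hGbd : ∃ C, ∀ f, |G f| ≤ C) (hS : IntervalIntegrable S volume (-(1 : ℝ) / 2) (1 / 2))
    (J : ℕ) : ∑ j ∈ Icc 1 J, waveletCov H G S j = scalingCov G S 0 - scalingCov G S J := by
  induction J with
  | zero => simp
  | succ J ih =>
    rw [sum_Icc_succ_top (Nat.le_add_left 1 J), ih, waveletCov_succ hHG hG hGbd hS]
    ring

end covariances

theorem covariance_eq_infinite_sum_waveletCov_general (H G S : ℝ → ℝ)
    (hGmeas : Measurable G)
    (hGbd : ∃ C : ℝ, ∀ f : ℝ, |G f| ≤ C)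
    (hHG : ∀ f : ℝ, H f + G f = 1)
    (hS : IntervalIntegrable S volume (-(1 : ℝ) / 2) (1 / 2))
    (hC0 : Tendsto (fun J : ℕ => scalingCov G S J) atTop (nhds 0)) :
    Tendsto (fun J : ℕ => ∑ j ∈ Finset.Icc 1 J, waveletCov H G S j) atTop
      (nhds (∫ f in (-(1 : ℝ) / 2)..(1 / 2), S f)) := by
  convert hC0.const_sub (scalingCov G S 0) using 2 with J
  · exact sum_Icc_waveletCov hHG hGmeas hGbd hS J
  · rw [sub_zero, scalingCov_zero]

/-- For bounded measurable `H, G` with `H + G = 1` and `S` integrable on `[−1/2, 1/2]`: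
if the scaling covariances vanish asymptotically (`C_J → 0` as `J → ∞`), then the series
`∑_{j=1}^∞ γ_j` converges and `∫_{−1/2}^{1/2} S(f) df = ∑_{j=1}^∞ γ_j`. -/
theorem covariance_eq_infinite_sum_waveletCov (H G S : ℝ → ℝ)
    (hHmeas : Measurable H) (hGmeas : Measurable G)
    (hHbd : ∃ C : ℝ, ∀ f : ℝ, |H f| ≤ C) (hGbd : ∃ C : ℝ, ∀ f : ℝ, |G f| ≤ C)
    (hHG : ∀ f : ℝ, H f + G f = 1)
    (hS : IntervalIntegrable S volume (-(1 : ℝ) / 2) (1 / 2))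
    (hC0 : Tendsto (fun J : ℕ => scalingCov G S J) atTop (nhds 0)) :
    Tendsto (fun J : ℕ => ∑ j ∈ Finset.Icc 1 J, waveletCov H G S j) atTop
      (nhds (∫ f in (-(1 : ℝ) / 2)..(1 / 2), S f)) :=
  covariance_eq_infinite_sum_waveletCov_general H G S hGmeas hGbd hHG hS hC0
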